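/- arXiv:2001.03328 — 4 statements merged into one kernel-verified Lean document; each statement's English description precedes it below -/
import Mathlib

section
/- Let X = (X_1,...,X_n) be a vector of i.i.d. real random variables, X' an independent copy, and f: R^n → R measurable with f(X) square-integrable. For I ⊆ [n], let X^I denote the vector obtained from X by replacing X_i with X_i' for all i ∈ I, and write X^{[i]} = X^{{1,...,i}}. Then Var(f(X)) = (1/2) Σ_{i=1}^n E[(f(X) - f(X^{(i)})) (f(X^{[i-1]}) - f(X^{[i]}))], where X^{(i)} = X^{{i}}. -/
open MeasureTheory ProbabilityTheory Finset
open scoped symmDiff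

private def sel (n : ℕ) (I : Finset (Fin n)) (z : Fin n ⊕ Fin n → ℝ) : Fin n → ℝ :=
  fun j => if j ∈ I then z (Sum.inr j) else z (Sum.inl j)

private lemma measurable_sel (n : ℕ) (I : Finset (Fin n)) : Measurable (sel n I) := by
  apply measurable_pi_lambda
  intro j
  by_cases h : j ∈ I <;> simp only [sel, h, if_true, if_false] <;> exact measurable_pi_apply _

private def swapK (n : ℕ) (S : Finset (Fin n)) : Fin n ⊕ Fin n → Fin n ⊕ Fin n :=
  Sum.elim (fun i => if i ∈ S then Sum.inr i else Sum.inl i)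
    (fun i => if i ∈ S then Sum.inl i else Sum.inr i)

private lemma swapK_invol (n : ℕ) (S : Finset (Fin n)) : Function.Involutive (swapK n S) := by
  rintro (i | i) <;> by_cases h : i ∈ S <;> simp [swapK, h]

private lemma sel_swapK (n : ℕ) (I S : Finset (Fin n)) (z : Fin n ⊕ Fin n → ℝ) :
    sel n I (fun k => z (swapK n S k)) = sel n (I ∆ S) z := by
  funext j
  by_cases hI : j ∈ I <;> by_cases hS : j ∈ S <;>
    simp [sel, swapK, Finset.mem_symmDiff, hI, hS]

private lemma measurable_swap_comp (n : ℕ) (S : Finset (Fin n)) :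
    Measurable (fun (z : Fin n ⊕ Fin n → ℝ) (k : Fin n ⊕ Fin n) => z (swapK n S k)) :=
  measurable_pi_lambda _ fun k => measurable_pi_apply _

private lemma pi_map_comp {ι : Type*} [Fintype ι] (ν : ι → Measure ℝ)
    [∀ i, IsProbabilityMeasure (ν i)] (e : ι → ι) (he : Function.Involutive e)
    (hν : ∀ k, ν (e k) = ν k) :
    Measure.map (fun z (k : ι) => z (e k)) (Measure.pi ν) = Measure.pi ν := by
  refine (Measure.pi_eq fun s hs => ?_).symm
  rw [Measure.map_apply (show Measurable fun (z : ι → ℝ) (k : ι) => z (e k) from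
    measurable_pi_lambda _ fun k => measurable_pi_apply (e k)) (MeasurableSet.univ_pi hs)]
  have hpre : (fun z (k : ι) => z (e k)) ⁻¹' Set.pi Set.univ s
      = Set.pi Set.univ fun k => s (e k) := by
    ext z
    simp only [Set.mem_preimage, Set.mem_pi, Set.mem_univ, true_implies]
    constructor
    · intro h k; have := h (e k); rwa [he k] at this
    · intro h k; have := h (e k); rwa [he k] at this
  rw [hpre, Measure.pi_pi]
  calc ∏ k, ν k (s (e k)) = ∏ k, ν (e k) (s (e k)) :=
        Finset.prod_congr rfl fun k _ => by rw [hν]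
    _ = ∏ k, ν k (s k) := Equiv.prod_comp he.toPerm fun k => ν k (s k)

private lemma l2_mul_int {α : Type*} [MeasurableSpace α] {m : Measure α} {u v : α → ℝ}
    (hu : MemLp u 2 m) (hv : MemLp v 2 m) :
    Integrable (fun x => u x * v x) m := by
  have h := L2.integrable_inner (𝕜 := ℝ) (hu.toLp u) (hv.toLp v)
  refine h.congr ?_
  filter_upwards [hu.coeFn_toLp, hv.coeFn_toLp] with x h1 h2
  simp [h1, h2, RCLike.inner_apply, mul_comm]

private lemma integral_sub_mul_sub {α : Type*} [MeasurableSpace α] {m : Measure α}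
    {a b c d : α → ℝ} (ha : MemLp a 2 m) (hb : MemLp b 2 m) (hc : MemLp c 2 m)
    (hd : MemLp d 2 m) :
    ∫ x, (a x - b x) * (c x - d x) ∂m
      = (∫ x, a x * c x ∂m) - (∫ x, a x * d x ∂m) - (∫ x, b x * c x ∂m)
        + ∫ x, b x * d x ∂m := by
  have hac := l2_mul_int ha hc
  have had := l2_mul_int ha hd
  have hbc := l2_mul_int hb hc
  have hbd := l2_mul_int hb hd
  have h1 : Integrable (fun x => a x * c x - a x * d x) m := hac.sub had
  have h2 : Integrable (fun x => b x * c x - b x * d x) m := hbc.sub hbd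
  have h0 : ∀ x, (a x - b x) * (c x - d x)
      = (a x * c x - a x * d x) - (b x * c x - b x * d x) := fun x => by ring
  simp_rw [h0]
  rw [integral_sub h1 h2, integral_sub hac had, integral_sub hbc hbd]
  ring

private lemma map_eq_pi {Ω ι : Type*} [MeasurableSpace Ω] [Fintype ι] (μ : Measure Ω)
    [IsProbabilityMeasure μ] (Y : ι → Ω → ℝ) (hY : ∀ i, Measurable (Y i))
    (h : iIndepFun Y μ) :
    Measure.map (fun ω i => Y i ω) μ = Measure.pi (fun i => Measure.map (Y i) μ) := by
  haveI : ∀ i, IsProbabilityMeasure (Measure.map (Y i) μ) :=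
    fun i => Measure.isProbabilityMeasure_map (hY i).aemeasurable
  refine (Measure.pi_eq fun s hs => ?_).symm
  rw [Measure.map_apply (measurable_pi_lambda _ hY) (MeasurableSet.univ_pi hs)]
  have hpre : (fun ω (i : ι) => Y i ω) ⁻¹' Set.pi Set.univ s = ⋂ i ∈ Finset.univ, Y i ⁻¹' s i := by
    ext ω; simp [Set.mem_pi]
  rw [hpre, h.measure_inter_preimage_eq_mul Finset.univ (fun i _ => hs i)]
  exact Finset.prod_congr rfl fun i _ => (Measure.map_apply (hY i) (hs i)).symm

private lemma Jswap {n : ℕ} (ν : Fin n ⊕ Fin n → Measure ℝ) [∀ k, IsProbabilityMeasure (ν k)]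
    (hν : ∀ i, ν (Sum.inr i) = ν (Sum.inl i)) (f : (Fin n → ℝ) → ℝ) (hf : Measurable f)
    (I K S : Finset (Fin n)) :
    ∫ z, f (sel n I z) * f (sel n K z) ∂(Measure.pi ν)
      = ∫ z, f (sel n (I ∆ S) z) * f (sel n (K ∆ S) z) ∂(Measure.pi ν) := by
  have hνs : ∀ k, ν (swapK n S k) = ν k := by
    rintro (i | i) <;> by_cases h : i ∈ S <;> simp only [swapK, Sum.elim_inl, Sum.elim_inr, h,
      if_true, if_false]
    exacts [hν i, (hν i).symm]
  have hm : Measurable fun z : (Fin n ⊕ Fin n) → ℝ => f (sel n I z) * f (sel n K z) :=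
    (hf.comp (measurable_sel n I)).mul (hf.comp (measurable_sel n K))
  conv_lhs => rw [← pi_map_comp ν (swapK n S) (swapK_invol n S) hνs]
  rw [integral_map (measurable_swap_comp n S).aemeasurable hm.aestronglyMeasurable]
  simp_rw [sel_swapK]

private lemma map_sel {n : ℕ} (ν : Fin n ⊕ Fin n → Measure ℝ) [∀ k, IsProbabilityMeasure (ν k)]
    (hν : ∀ i, ν (Sum.inr i) = ν (Sum.inl i)) (I : Finset (Fin n)) :
    Measure.map (sel n I) (Measure.pi ν) = Measure.map (sel n ∅) (Measure.pi ν) := by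
  have hνs : ∀ k, ν (swapK n I k) = ν k := by
    rintro (i | i) <;> by_cases h : i ∈ I <;> simp only [swapK, Sum.elim_inl, Sum.elim_inr, h,
      if_true, if_false]
    exacts [hν i, (hν i).symm]
  have h1 : sel n I = (sel n ∅) ∘ (fun z (k : Fin n ⊕ Fin n) => z (swapK n I k)) := by
    funext z
    show sel n I z = sel n ∅ (fun k => z (swapK n I k))
    have he : (∅ : Finset (Fin n)) ∆ I = I := by
      ext j; simp [Finset.mem_symmDiff]
    rw [sel_swapK, he]
  rw [h1, ← Measure.map_map (measurable_sel n ∅) (measurable_swap_comp n I),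
    pi_map_comp ν (swapK n I) (swapK_invol n I) hνs]

private lemma Jindep {n : ℕ} (ν : Fin n ⊕ Fin n → Measure ℝ) [∀ k, IsProbabilityMeasure (ν k)]
    (hν : ∀ i, ν (Sum.inr i) = ν (Sum.inl i)) (f : (Fin n → ℝ) → ℝ) (hf : Measurable f) :
    ∫ z, f (sel n ∅ z) * f (sel n Finset.univ z) ∂(Measure.pi ν)
      = (∫ z, f (sel n ∅ z) ∂(Measure.pi ν)) ^ 2 := by
  have hπ₂ : (Measure.pi fun i : Fin n => ν (Sum.inr i)) = Measure.pi fun i => ν (Sum.inl i) := by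
    congr 1; funext i; exact hν i
  have hΦ := measurePreserving_sumPiEquivProdPi (X := fun _ : Fin n ⊕ Fin n => ℝ) ν
  have hEmb := (MeasurableEquiv.sumPiEquivProdPi (fun _ : Fin n ⊕ Fin n => ℝ)).measurableEmbedding
  have ha : ∀ z : Fin n ⊕ Fin n → ℝ,
      sel n ∅ z = (MeasurableEquiv.sumPiEquivProdPi (fun _ : Fin n ⊕ Fin n => ℝ) z).1 := by
    intro z; funext j
    simp [sel, MeasurableEquiv.coe_sumPiEquivProdPi, Equiv.sumPiEquivProdPi_apply]
  have hb : ∀ z : Fin n ⊕ Fin n → ℝ,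
      sel n Finset.univ z
        = (MeasurableEquiv.sumPiEquivProdPi (fun _ : Fin n ⊕ Fin n => ℝ) z).2 := by
    intro z; funext j
    simp [sel, MeasurableEquiv.coe_sumPiEquivProdPi, Equiv.sumPiEquivProdPi_apply]
  have key1 : ∫ z, f (sel n ∅ z) * f (sel n Finset.univ z) ∂(Measure.pi ν)
      = (∫ x, f x ∂(Measure.pi fun i : Fin n => ν (Sum.inl i)))
          * ∫ x, f x ∂(Measure.pi fun i : Fin n => ν (Sum.inr i)) := by
    simp_rw [ha, hb]
    rw [hΦ.integral_comp hEmb fun p => f p.1 * f p.2]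
    exact integral_prod_mul f f
  have key2 : ∫ z, f (sel n ∅ z) ∂(Measure.pi ν)
      = ∫ x, f x ∂(Measure.pi fun i : Fin n => ν (Sum.inl i)) := by
    simp_rw [ha]
    rw [hΦ.integral_comp hEmb fun p => f p.1]
    have h := integral_prod_mul (μ := Measure.pi fun i : Fin n => ν (Sum.inl i))
      (ν := Measure.pi fun i : Fin n => ν (Sum.inr i)) f (fun _ => (1:ℝ))
    simpa using h
  rw [key1, key2, hπ₂, sq]

/-- Variance decomposition (Chatterjee): for i.i.d. coordinates `X` with independent
copy `X'`, `Var(f(X)) = (1/2) ∑ᵢ E[(f(X) - f(X^{(i)}))(f(X^{[i-1]}) - f(X^{[i]}))]`. -/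
theorem stmt0 {Ω : Type*} [MeasurableSpace Ω] (μ : Measure Ω) [IsProbabilityMeasure μ]
    (n : ℕ) (X X' : Fin n → Ω → ℝ) (f : (Fin n → ℝ) → ℝ)
    (hmeas : ∀ i, Measurable (X i)) (hmeas' : ∀ i, Measurable (X' i))
    (hindep : iIndepFun
      (Sum.elim X X' : Fin n ⊕ Fin n → Ω → ℝ) μ)
    (hid : ∀ i j : Fin n, Measure.map (X i) μ = Measure.map (X j) μ)
    (hid' : ∀ i : Fin n, Measure.map (X' i) μ = Measure.map (X i) μ)
    (hf : Measurable f)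
    (hL2 : MemLp (fun ω => f (fun j => X j ω)) 2 μ) :
    variance (fun ω => f (fun j => X j ω)) μ =
      (1 / 2) * ∑ i : Fin n, ∫ ω,
        (f (fun j => X j ω) - f (fun j => if j = i then X' j ω else X j ω)) *
        (f (fun j => if j < i then X' j ω else X j ω) -
         f (fun j => if j ≤ i then X' j ω else X j ω)) ∂μ := by
  classical
  set Y : Fin n ⊕ Fin n → Ω → ℝ := Sum.elim X X' with hY_def
  have hYm : ∀ k, Measurable (Y k) := by
    rintro (i | i)
    · exact hmeas i
    · exact hmeas' i
  set ν : Fin n ⊕ Fin n → Measure ℝ := fun k => Measure.map (Y k) μ with hν_def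
  haveI hνp : ∀ k, IsProbabilityMeasure (ν k) :=
    fun k => Measure.isProbabilityMeasure_map (hYm k).aemeasurable
  have hνlr : ∀ i : Fin n, ν (Sum.inr i) = ν (Sum.inl i) := by
    intro i
    simp only [hν_def, hY_def, Sum.elim_inl, Sum.elim_inr]
    exact hid' i
  set π : Measure ((Fin n ⊕ Fin n) → ℝ) := Measure.pi ν with hπ_def
  haveI hπp : IsProbabilityMeasure π := by rw [hπ_def]; infer_instance
  set T : Ω → (Fin n ⊕ Fin n) → ℝ := fun ω k => Y k ω with hT_def
  have hTm : Measurable T := measurable_pi_lambda _ hYm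
  have hmapT : Measure.map T μ = π := map_eq_pi μ Y hYm hindep
  have e0 : ∀ ω, (fun j => X j ω) = sel n ∅ (T ω) := by
    intro ω; funext j; simp [sel, hT_def, hY_def]
  have hXvm : Measurable fun ω (j : Fin n) => X j ω := measurable_pi_lambda _ hmeas
  have hmapsel : ∀ I : Finset (Fin n), Measure.map (fun ω => sel n I (T ω)) μ
      = Measure.map (fun ω (j : Fin n) => X j ω) μ := by
    intro I
    rw [show (fun ω => sel n I (T ω)) = (sel n I) ∘ T from rfl,
      ← Measure.map_map (measurable_sel n I) hTm, hmapT, hπ_def,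
      map_sel ν hνlr I, ← hπ_def, ← hmapT,
      Measure.map_map (measurable_sel n ∅) hTm,
      show (sel n ∅) ∘ T = fun ω (j : Fin n) => X j ω from
        funext fun ω => (e0 ω).symm]
  have hfπ : MemLp f 2 (Measure.map (fun ω (j : Fin n) => X j ω) μ) :=
    (memLp_map_measure_iff hf.aestronglyMeasurable hXvm.aemeasurable).mpr hL2
  have hL2I : ∀ I : Finset (Fin n), MemLp (fun ω => f (sel n I (T ω))) 2 μ := by
    intro I
    exact (memLp_map_measure_iff hf.aestronglyMeasurable
      ((measurable_sel n I).comp hTm).aemeasurable).mp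
      (by rw [show (sel n I ∘ T) = fun ω => sel n I (T ω) from rfl, hmapsel I]; exact hfπ)
  have hInt : ∀ I K : Finset (Fin n),
      Integrable (fun ω => f (sel n I (T ω)) * f (sel n K (T ω))) μ :=
    fun I K => l2_mul_int (hL2I I) (hL2I K)
  have hJ : ∀ I K : Finset (Fin n),
      (∫ ω, f (sel n I (T ω)) * f (sel n K (T ω)) ∂μ)
        = ∫ z, f (sel n I z) * f (sel n K z) ∂π := by
    intro I K
    rw [← hmapT, integral_map hTm.aemeasurable
      (show AEStronglyMeasurable (fun z : (Fin n ⊕ Fin n) → ℝ =>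
          f (sel n I z) * f (sel n K z)) (Measure.map T μ) from
        ((hf.comp (measurable_sel n I)).mul (hf.comp (measurable_sel n K))).aestronglyMeasurable)]
  have hJswap : ∀ I K S : Finset (Fin n),
      (∫ z, f (sel n I z) * f (sel n K z) ∂π)
        = ∫ z, f (sel n (I ∆ S) z) * f (sel n (K ∆ S) z) ∂π := by
    intro I K S; rw [hπ_def]; exact Jswap ν hνlr f hf I K S
  set G : ℕ → ℝ := fun m =>
    ∫ z, f (sel n ∅ z) * f (sel n (Finset.univ.filter fun j : Fin n => (j : ℕ) < m) z) ∂π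
    with hG_def
  have hB0 : (Finset.univ.filter fun j : Fin n => (j : ℕ) < 0) = (∅ : Finset (Fin n)) := by
    ext j; simp
  have hBn : (Finset.univ.filter fun j : Fin n => (j : ℕ) < n) = (Finset.univ : Finset (Fin n)) := by
    ext j; simp [j.isLt]
  have hBsd : ∀ i : Fin n, (Finset.univ.filter fun j : Fin n => (j : ℕ) < (i : ℕ)) ∆ {i}
      = Finset.univ.filter fun j : Fin n => (j : ℕ) < (i : ℕ) + 1 := by
    intro i; ext j
    simp only [Finset.mem_symmDiff, Finset.mem_filter, Finset.mem_univ, true_and,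
      Finset.mem_singleton, Fin.ext_iff]
    omega
  have hBsd' : ∀ i : Fin n, (Finset.univ.filter fun j : Fin n => (j : ℕ) < (i : ℕ) + 1) ∆ {i}
      = Finset.univ.filter fun j : Fin n => (j : ℕ) < (i : ℕ) := by
    intro i; ext j
    simp only [Finset.mem_symmDiff, Finset.mem_filter, Finset.mem_univ, true_and,
      Finset.mem_singleton, Fin.ext_iff]
    omega
  have hsing : ∀ i : Fin n, ({i} : Finset (Fin n)) ∆ {i} = (∅ : Finset (Fin n)) := by
    intro i; simp [symmDiff_self]
  have hterm : ∀ i : Fin n,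
      (∫ ω, (f (fun j => X j ω) - f (fun j => if j = i then X' j ω else X j ω)) *
        (f (fun j => if j < i then X' j ω else X j ω) -
         f (fun j => if j ≤ i then X' j ω else X j ω)) ∂μ)
      = 2 * (G (i : ℕ) - G ((i : ℕ) + 1)) := by
    intro i
    have e1 : ∀ ω, (fun j => if j = i then X' j ω else X j ω) = sel n {i} (T ω) := by
      intro ω; funext j
      by_cases h : j = i <;> simp [sel, hT_def, hY_def, h]
    have e2 : ∀ ω, (fun j => if j < i then X' j ω else X j ω)
        = sel n (Finset.univ.filter fun j : Fin n => (j : ℕ) < (i : ℕ)) (T ω) := by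
      intro ω; funext j
      rw [sel]
      by_cases h : (j : ℕ) < (i : ℕ)
      · rw [if_pos (show j < i from h), if_pos (by simpa using h)]; rfl
      · rw [if_neg (show ¬j < i from h), if_neg (by simpa using h)]; rfl
    have e3 : ∀ ω, (fun j => if j ≤ i then X' j ω else X j ω)
        = sel n (Finset.univ.filter fun j : Fin n => (j : ℕ) < (i : ℕ) + 1) (T ω) := by
      intro ω; funext j
      rw [sel]
      by_cases h : (j : ℕ) ≤ (i : ℕ)
      · rw [if_pos (show j ≤ i from h),
          if_pos (show j ∈ Finset.univ.filter fun j : Fin n => (j : ℕ) < (i : ℕ) + 1 by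
            simp; omega)]
        rfl
      · rw [if_neg (show ¬j ≤ i from h),
          if_neg (show ¬j ∈ Finset.univ.filter fun j : Fin n => (j : ℕ) < (i : ℕ) + 1 by
            simp; omega)]
        rfl
    simp_rw [e0, e1, e2, e3]
    have hexp := integral_sub_mul_sub (m := μ) (hL2I ∅) (hL2I {i})
      (hL2I (Finset.univ.filter fun j : Fin n => (j : ℕ) < (i : ℕ)))
      (hL2I (Finset.univ.filter fun j : Fin n => (j : ℕ) < (i : ℕ) + 1))
    rw [hexp, hJ, hJ, hJ, hJ]
    have hswap1 : (∫ z, f (sel n {i} z) *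
          f (sel n (Finset.univ.filter fun j : Fin n => (j : ℕ) < (i : ℕ)) z) ∂π)
        = ∫ z, f (sel n ∅ z) *
          f (sel n (Finset.univ.filter fun j : Fin n => (j : ℕ) < (i : ℕ) + 1) z) ∂π := by
      rw [hJswap {i} (Finset.univ.filter fun j : Fin n => (j : ℕ) < (i : ℕ)) {i},
        hsing i, hBsd i]
    have hswap2 : (∫ z, f (sel n {i} z) *
          f (sel n (Finset.univ.filter fun j : Fin n => (j : ℕ) < (i : ℕ) + 1) z) ∂π)
        = ∫ z, f (sel n ∅ z) *
          f (sel n (Finset.univ.filter fun j : Fin n => (j : ℕ) < (i : ℕ)) z) ∂π := by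
      rw [hJswap {i} (Finset.univ.filter fun j : Fin n => (j : ℕ) < (i : ℕ) + 1) {i},
        hsing i, hBsd' i]
    rw [hswap1, hswap2]
    simp only [hG_def]
    ring
  have hE : (∫ z, f (sel n ∅ z) ∂π) = μ[fun ω => f (fun j => X j ω)] := by
    rw [← hmapT, integral_map hTm.aemeasurable
      (show AEStronglyMeasurable (fun z : (Fin n ⊕ Fin n) → ℝ => f (sel n ∅ z))
          (Measure.map T μ) from (hf.comp (measurable_sel n ∅)).aestronglyMeasurable)]
    refine integral_congr_ae (Filter.Eventually.of_forall fun ω => ?_)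
    show f (sel n ∅ (T ω)) = f (fun j => X j ω)
    exact congrArg f (e0 ω).symm
  have h2 : (μ[(fun ω => f (fun j => X j ω)) ^ 2] : ℝ) = G 0 := by
    simp only [hG_def]
    rw [hB0, ← hJ ∅ ∅]
    refine integral_congr_ae (Filter.Eventually.of_forall fun ω => ?_)
    simp only [Pi.pow_apply]
    rw [e0 ω, pow_two]
  have h3 : (μ[fun ω => f (fun j => X j ω)]) ^ 2 = G n := by
    simp only [hG_def]
    rw [hBn, ← hE, hπ_def]
    exact (Jindep ν hνlr f hf).symm
  have hvar : variance (fun ω => f (fun j => X j ω)) μ = G 0 - G n := by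
    rw [variance_eq_sub hL2, h2, h3]
  rw [hvar]
  simp only [hterm]
  rw [Fin.sum_univ_eq_sum_range (fun m => 2 * (G m - G (m + 1))) n,
    ← Finset.mul_sum, Finset.sum_range_sub' G n]
  ring
end

section
/- Let X, X', X'' be three mutually independent copies of an i.i.d. n-vector, and f: R^n → R measurable square-integrable. For 2 ≤ i ≤ n write J = (X_2,...,X_{i-1}), J' = (X_2',...,X_{i-1}'), K = (X_{i+1},...,X_n). Then E[(f(X_1,J,X_i,K) - f(X_1'',J,X_i,K)) (f(X_1,J',X_i,K) - f(X_1',J',X_i,K))] ≥ E[(f(X_1,J,X_i,K) - f(X_1'',J,X_i,K)) (f(X_1,J',X_i',K) - f(X_1',J',X_i',K))]. -/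
open MeasureTheory ProbabilityTheory Finset


section stmt2aux

variable {α : Type*} [MeasurableSpace α] (ν : Measure α) [IsProbabilityMeasure ν]

lemma stmt2_aux_update {m : ℕ} (i : Fin m) :
    MeasurePreserving (fun p : (Fin m → α) × α => Function.update p.1 i p.2)
      ((Measure.pi fun _ : Fin m => ν).prod ν) (Measure.pi fun _ : Fin m => ν) := by
  refine ⟨measurable_update', ?_⟩
  refine (Measure.pi_eq fun s hs => ?_).symm
  rw [Measure.map_apply measurable_update' (MeasurableSet.univ_pi hs)]
  have hpre : (fun p : (Fin m → α) × α => Function.update p.1 i p.2) ⁻¹' (Set.univ.pi s)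
      = (Set.univ.pi (Function.update s i Set.univ)) ×ˢ (s i) := by
    ext ⟨w, t⟩
    simp only [Set.mem_preimage, Set.mem_pi, Set.mem_univ, true_implies, Set.mem_prod]
    constructor
    · intro hw
      refine ⟨fun j => ?_, by simpa using hw i⟩
      rcases eq_or_ne j i with rfl | hj
      · simp
      · simpa [Function.update_of_ne hj] using hw j
    · rintro ⟨hw, ht⟩ j
      rcases eq_or_ne j i with rfl | hj
      · simpa using ht
      · simpa [Function.update_of_ne hj] using hw j
  rw [hpre, Measure.prod_prod, Measure.pi_pi]
  have h1 : (∏ j, ν (Function.update s i Set.univ j))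
      = ∏ j, Function.update (fun j => ν (s j)) i (ν Set.univ) j :=
    Finset.prod_congr rfl fun j _ => Function.apply_update (fun _ t => ν t) s i Set.univ j
  rw [h1, Finset.prod_update_of_mem (Finset.mem_univ i), measure_univ, one_mul, mul_comm]
  exact (Finset.prod_eq_mul_prod_sdiff_singleton_of_mem (Finset.mem_univ i) fun j => ν (s j)).symm

lemma stmt2_aux_perm {ι : Type*} [Fintype ι] (e : ι ≃ ι) :
    MeasurePreserving (fun u : ι → α => u ∘ e)
      (Measure.pi fun _ : ι => ν) (Measure.pi fun _ : ι => ν) := by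
  have hm : Measurable (fun u : ι → α => u ∘ e) :=
    measurable_pi_lambda _ fun j => measurable_pi_apply _
  refine ⟨hm, ?_⟩
  refine (Measure.pi_eq fun s hs => ?_).symm
  rw [Measure.map_apply hm (MeasurableSet.univ_pi hs)]
  have hpre : (fun u : ι → α => u ∘ e) ⁻¹' (Set.univ.pi s)
      = Set.univ.pi (fun k => s (e.symm k)) := by
    ext u
    simp only [Set.mem_preimage, Set.mem_pi, Set.mem_univ, true_implies, Function.comp]
    constructor
    · intro hu k
      simpa using hu (e.symm k)
    · intro hu j
      simpa using hu (e j)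
  rw [hpre, Measure.pi_pi]
  exact Equiv.prod_comp e.symm fun j => ν (s j)

lemma stmt2_aux_sum (m : ℕ) :
    MeasurePreserving
      (fun p : (Fin m → α) × ((Fin m → α) × (Fin m → α)) =>
        (Sum.elim p.1 (Sum.elim p.2.1 p.2.2) : Fin m ⊕ (Fin m ⊕ Fin m) → α))
      ((Measure.pi fun _ : Fin m => ν).prod
        ((Measure.pi fun _ : Fin m => ν).prod (Measure.pi fun _ : Fin m => ν)))
      (Measure.pi fun _ : Fin m ⊕ (Fin m ⊕ Fin m) => ν) := by
  have hm : Measurable (fun p : (Fin m → α) × ((Fin m → α) × (Fin m → α)) =>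
      (Sum.elim p.1 (Sum.elim p.2.1 p.2.2) : Fin m ⊕ (Fin m ⊕ Fin m) → α)) := by
    apply measurable_pi_lambda
    rintro (j | j | j)
    · exact (measurable_pi_apply j).comp measurable_fst
    · exact (measurable_pi_apply j).comp (measurable_fst.comp measurable_snd)
    · exact (measurable_pi_apply j).comp (measurable_snd.comp measurable_snd)
  refine ⟨hm, ?_⟩
  refine (Measure.pi_eq fun s hs => ?_).symm
  rw [Measure.map_apply hm (MeasurableSet.univ_pi hs)]
  have hpre : (fun p : (Fin m → α) × ((Fin m → α) × (Fin m → α)) =>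
        (Sum.elim p.1 (Sum.elim p.2.1 p.2.2) : Fin m ⊕ (Fin m ⊕ Fin m) → α)) ⁻¹'
          (Set.univ.pi s)
      = (Set.univ.pi fun j => s (.inl j)) ×ˢ
          ((Set.univ.pi fun j => s (.inr (.inl j))) ×ˢ
            (Set.univ.pi fun j => s (.inr (.inr j)))) := by
    ext ⟨x, y, z⟩
    simp only [Set.mem_preimage, Set.mem_pi, Set.mem_univ, true_implies, Set.mem_prod]
    constructor
    · intro hq
      exact ⟨fun j => hq (.inl j), fun j => hq (.inr (.inl j)), fun j => hq (.inr (.inr j))⟩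
    · rintro ⟨h1, h2, h3⟩ (j | j | j)
      exacts [h1 j, h2 j, h3 j]
  rw [hpre, Measure.prod_prod, Measure.prod_prod, Measure.pi_pi, Measure.pi_pi, Measure.pi_pi]
  rw [Fintype.prod_sum_type, Fintype.prod_sum_type]

lemma stmt2_aux_cs {β : Type*} [MeasurableSpace β] (P : Measure β) [IsProbabilityMeasure P]
    (u : β → ℝ) (hum : AEStronglyMeasurable u P) (h2 : Integrable (fun t => u t * u t) P) :
    (∫ t, u t ∂P) * (∫ t, u t ∂P) ≤ ∫ t, u t * u t ∂P := by
  have hu : Integrable u P := by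
    refine Integrable.mono' ((integrable_const 1).add h2) hum (Filter.Eventually.of_forall
      fun t => ?_)
    show ‖u t‖ ≤ 1 + u t * u t
    rw [Real.norm_eq_abs]
    rcases abs_cases (u t) with ⟨h, _⟩ | ⟨h, _⟩ <;> nlinarith
  set c := ∫ t, u t ∂P with hc
  have h0 : 0 ≤ ∫ t, (u t - c) * (u t - c) ∂P := integral_nonneg fun t => mul_self_nonneg _
  have hexp : ∫ t, (u t - c) * (u t - c) ∂P = ∫ t, u t * u t ∂P - c * c := by
    have hrw : (fun t => (u t - c) * (u t - c))
        = fun t => u t * u t - (2 * c) * u t + c * c := by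
      funext t; ring
    have i1 : Integrable (fun t => u t * u t - 2 * c * u t) P := h2.sub (hu.const_mul (2 * c))
    rw [hrw, integral_add i1 (integrable_const _),
      integral_sub h2 (hu.const_mul (2 * c)), integral_const_mul, integral_const]
    simp [← hc]
    ring
  nlinarith [h0, hexp]

end stmt2aux

/-- First factor/second factor combinations of the statement, as functions on the big
product space. -/
def stmt2F1 (n : ℕ) (f : (Fin n → ℝ) → ℝ) (i : Fin n) :
    ((Fin n ⊕ (Fin n ⊕ Fin n)) → ℝ) → ℝ := fun u =>
  (f (fun j => u (.inl j)) -
      f (fun j => if (j : ℕ) = 0 then u (.inr (.inr j)) else u (.inl j))) *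
    (f (fun j => if 0 < (j : ℕ) ∧ j < i then u (.inr (.inl j)) else u (.inl j)) -
      f (fun j => if j < i then u (.inr (.inl j)) else u (.inl j)))

def stmt2F2 (n : ℕ) (f : (Fin n → ℝ) → ℝ) (i : Fin n) :
    ((Fin n ⊕ (Fin n ⊕ Fin n)) → ℝ) → ℝ := fun u =>
  (f (fun j => u (.inl j)) -
      f (fun j => if (j : ℕ) = 0 then u (.inr (.inr j)) else u (.inl j))) *
    (f (fun j => if 0 < (j : ℕ) ∧ j ≤ i then u (.inr (.inl j)) else u (.inl j)) -
      f (fun j => if j ≤ i then u (.inr (.inl j)) else u (.inl j)))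

def stmt2Bf (n : ℕ) (f : (Fin n → ℝ) → ℝ) (i : Fin n) :
    (Fin n → ℝ) → (Fin n → ℝ) → ℝ := fun x w =>
  f (fun j => if 0 < (j : ℕ) ∧ j < i then w j else x j) -
    f (fun j => if j < i then w j else x j)

def stmt2Bg (n : ℕ) (f : (Fin n → ℝ) → ℝ) (i : Fin n) :
    (Fin n → ℝ) → (Fin n → ℝ) → ℝ := fun x w =>
  f (fun j => if 0 < (j : ℕ) ∧ j ≤ i then w j else x j) -
    f (fun j => if j ≤ i then w j else x j)


/-- Monotonicity: resampling one additional coordinate decreases the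
covariance-type expectation. Coordinates are 0-based: coordinate `0` plays the role of
`X₁`, coordinates `1,…,i-1` form `J`, coordinate `i` is `Xᵢ`, coordinates `> i` form `K`. -/
theorem stmt2 {Ω : Type*} [MeasurableSpace Ω] (μ : Measure Ω) [IsProbabilityMeasure μ]
    (n : ℕ) (X X' X'' : Fin n → Ω → ℝ) (f : (Fin n → ℝ) → ℝ) (i : Fin n) (hi : 0 < (i : ℕ))
    (hmeas : ∀ j, Measurable (X j)) (hmeas' : ∀ j, Measurable (X' j))
    (hmeas'' : ∀ j, Measurable (X'' j))
    (hindep : iIndepFun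
      (Sum.elim X (Sum.elim X' X'') : Fin n ⊕ (Fin n ⊕ Fin n) → Ω → ℝ) μ)
    (hid : ∀ j k : Fin n, Measure.map (X j) μ = Measure.map (X k) μ)
    (hid' : ∀ j : Fin n, Measure.map (X' j) μ = Measure.map (X j) μ)
    (hid'' : ∀ j : Fin n, Measure.map (X'' j) μ = Measure.map (X j) μ)
    (hf : Measurable f)
    (hint1 : Integrable (fun ω =>
        (f (fun j => X j ω) - f (fun j => if (j : ℕ) = 0 then X'' j ω else X j ω)) *
        (f (fun j => if 0 < (j : ℕ) ∧ j < i then X' j ω else X j ω) -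
         f (fun j => if j < i then X' j ω else X j ω))) μ)
    (hint2 : Integrable (fun ω =>
        (f (fun j => X j ω) - f (fun j => if (j : ℕ) = 0 then X'' j ω else X j ω)) *
        (f (fun j => if 0 < (j : ℕ) ∧ j ≤ i then X' j ω else X j ω) -
         f (fun j => if j ≤ i then X' j ω else X j ω))) μ) :
    ∫ ω,
        (f (fun j => X j ω) - f (fun j => if (j : ℕ) = 0 then X'' j ω else X j ω)) *
        (f (fun j => if 0 < (j : ℕ) ∧ j < i then X' j ω else X j ω) -
         f (fun j => if j < i then X' j ω else X j ω)) ∂μ ≥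
    ∫ ω,
        (f (fun j => X j ω) - f (fun j => if (j : ℕ) = 0 then X'' j ω else X j ω)) *
        (f (fun j => if 0 < (j : ℕ) ∧ j ≤ i then X' j ω else X j ω) -
         f (fun j => if j ≤ i then X' j ω else X j ω)) ∂μ := by
  classical
  set ν : Measure ℝ := μ.map (X i) with hν
  haveI hνP : IsProbabilityMeasure ν := Measure.isProbabilityMeasure_map (hmeas i).aemeasurable
  -- the joint random vector
  have hYm : ∀ s : Fin n ⊕ (Fin n ⊕ Fin n), Measurable (Sum.elim X (Sum.elim X' X'') s) := by
    rintro (j | j | j)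
    exacts [hmeas j, hmeas' j, hmeas'' j]
  have hYd : ∀ s, μ.map (Sum.elim X (Sum.elim X' X'') s) = ν := by
    rintro (j | j | j)
    · exact hid j i
    · show μ.map (X' j) = ν
      rw [hid' j]; exact hid j i
    · show μ.map (X'' j) = ν
      rw [hid'' j]; exact hid j i
  set T : Ω → (Fin n ⊕ (Fin n ⊕ Fin n)) → ℝ := fun ω s => Sum.elim X (Sum.elim X' X'') s ω
    with hT
  have hTm : Measurable T := measurable_pi_lambda _ hYm
  set Pn : Measure (Fin n → ℝ) := Measure.pi fun _ => ν with hPn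
  set Pb : Measure ((Fin n ⊕ (Fin n ⊕ Fin n)) → ℝ) := Measure.pi fun _ => ν with hPb
  haveI : IsProbabilityMeasure Pn := by rw [hPn]; infer_instance
  haveI : IsProbabilityMeasure Pb := by rw [hPb]; infer_instance
  have hmapT : μ.map T = Pb := by
    rw [hPb]
    refine (Measure.pi_eq fun s hs => ?_).symm
    rw [Measure.map_apply hTm (MeasurableSet.univ_pi hs)]
    have hp : T ⁻¹' Set.univ.pi s = ⋂ k, Sum.elim X (Sum.elim X' X'') k ⁻¹' s k := by
      ext ω
      simp [hT, Set.mem_iInter]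
    rw [hp, hindep.meas_iInter fun k => ⟨s k, hs k, rfl⟩]
    exact Finset.prod_congr rfl fun k _ => by rw [← hYd k, Measure.map_apply (hYm k) (hs k)]
  -- measurability of the various compositions with `f`
  have mF1 : Measurable (stmt2F1 n f i) := by
    unfold stmt2F1
    apply Measurable.mul <;> apply Measurable.sub <;>
      exact hf.comp (measurable_pi_lambda _ fun j => by
        first
        | exact measurable_pi_apply _
        | (split_ifs <;> exact measurable_pi_apply _))
  have mF2 : Measurable (stmt2F2 n f i) := by
    unfold stmt2F2
    apply Measurable.mul <;> apply Measurable.sub <;>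
      exact hf.comp (measurable_pi_lambda _ fun j => by
        first
        | exact measurable_pi_apply _
        | (split_ifs <;> exact measurable_pi_apply _))
  have mBfp : Measurable (fun p : (Fin n → ℝ) × (Fin n → ℝ) => stmt2Bf n f i p.1 p.2) := by
    unfold stmt2Bf
    apply Measurable.sub <;>
      exact hf.comp (measurable_pi_lambda _ fun j => by
        split_ifs
        exacts [(measurable_pi_apply j).comp measurable_snd,
          (measurable_pi_apply j).comp measurable_fst])
  have mBgp : Measurable (fun p : (Fin n → ℝ) × (Fin n → ℝ) => stmt2Bg n f i p.1 p.2) := by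
    unfold stmt2Bg
    apply Measurable.sub <;>
      exact hf.comp (measurable_pi_lambda _ fun j => by
        split_ifs
        exacts [(measurable_pi_apply j).comp measurable_snd,
          (measurable_pi_apply j).comp measurable_fst])
  -- the two conditional-expectation-like kernels
  set G : (Fin n → ℝ) → ℝ := fun x => ∫ w, stmt2Bf n f i x w ∂Pn with hG
  set H : (Fin n → ℝ) → ℝ := fun x => ∫ w, stmt2Bg n f i x w ∂Pn with hH
  have hGsm : StronglyMeasurable G := by
    rw [hG]; exact mBfp.stronglyMeasurable.integral_prod_right'
  have hHsm : StronglyMeasurable H := by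
    rw [hH]; exact mBgp.stronglyMeasurable.integral_prod_right'
  -- the permutation exchanging the J-block of X with the J-block of X''
  set σ : (Fin n ⊕ (Fin n ⊕ Fin n)) → (Fin n ⊕ (Fin n ⊕ Fin n)) := fun s =>
    Sum.elim (fun j : Fin n => if 0 < (j : ℕ) ∧ j < i then Sum.inr (Sum.inr j) else Sum.inl j)
      (Sum.elim (fun j : Fin n => Sum.inr (Sum.inl j))
        (fun j : Fin n => if 0 < (j : ℕ) ∧ j < i then Sum.inl j else Sum.inr (Sum.inr j))) s
    with hσ
  have hσσ : ∀ s, σ (σ s) = s := by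
    rintro (j | j | j) <;> by_cases hc : 0 < (j : ℕ) ∧ j < i <;> simp [hσ, hc]
  set e : (Fin n ⊕ (Fin n ⊕ Fin n)) ≃ (Fin n ⊕ (Fin n ⊕ Fin n)) := ⟨σ, σ, hσσ, hσσ⟩ with he
  have hPerm : MeasurePreserving (fun u : (Fin n ⊕ (Fin n ⊕ Fin n)) → ℝ => u ∘ e) Pb Pb := by
    rw [hPb]; exact stmt2_aux_perm ν e
  have hSum : MeasurePreserving
      (fun p : (Fin n → ℝ) × ((Fin n → ℝ) × (Fin n → ℝ)) =>
        (Sum.elim p.1 (Sum.elim p.2.1 p.2.2) : Fin n ⊕ (Fin n ⊕ Fin n) → ℝ))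
      (Pn.prod (Pn.prod Pn)) Pb := by
    rw [hPn, hPb]; exact stmt2_aux_sum ν n
  have hUpd : MeasurePreserving (fun p : (Fin n → ℝ) × ℝ => Function.update p.1 i p.2)
      (Pn.prod ν) Pn := by
    rw [hPn]; exact stmt2_aux_update ν i
  -- pointwise identities after the permutation
  have key1 : ∀ p : (Fin n → ℝ) × ((Fin n → ℝ) × (Fin n → ℝ)),
      stmt2F1 n f i ((Sum.elim p.1 (Sum.elim p.2.1 p.2.2) : _ → ℝ) ∘ e)
        = stmt2Bf n f i p.1 p.2.2 * stmt2Bf n f i p.1 p.2.1 := by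
    rintro ⟨x, y, z⟩
    simp only [stmt2F1, stmt2Bf]
    have h1 : (fun j : Fin n => ((Sum.elim x (Sum.elim y z) : _ → ℝ) ∘ e) (Sum.inl j))
        = fun j : Fin n => if 0 < (j : ℕ) ∧ j < i then z j else x j := by
      funext j
      by_cases hc : 0 < (j : ℕ) ∧ j < i <;> simp [he, hσ, hc]
    have h2 : (fun j : Fin n => if (j : ℕ) = 0
          then ((Sum.elim x (Sum.elim y z) : _ → ℝ) ∘ e) (Sum.inr (Sum.inr j))
          else ((Sum.elim x (Sum.elim y z) : _ → ℝ) ∘ e) (Sum.inl j))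
        = fun j : Fin n => if j < i then z j else x j := by
      funext j
      by_cases h0 : (j : ℕ) = 0
      · have hji : j < i := by rw [Fin.lt_def]; omega
        have hnc : ¬(0 < (j : ℕ) ∧ j < i) := by simp [h0]
        simp [he, hσ, h0, hnc, hji]
      · by_cases hlt : j < i
        · have hc : 0 < (j : ℕ) ∧ j < i := ⟨Nat.pos_of_ne_zero h0, hlt⟩
          simp [he, hσ, h0, hc, hlt]
        · have hnc : ¬(0 < (j : ℕ) ∧ j < i) := fun hcc => hlt hcc.2
          simp [he, hσ, h0, hnc, hlt]
    have h3 : (fun j : Fin n => if 0 < (j : ℕ) ∧ j < i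
          then ((Sum.elim x (Sum.elim y z) : _ → ℝ) ∘ e) (Sum.inr (Sum.inl j))
          else ((Sum.elim x (Sum.elim y z) : _ → ℝ) ∘ e) (Sum.inl j))
        = fun j : Fin n => if 0 < (j : ℕ) ∧ j < i then y j else x j := by
      funext j
      by_cases hc : 0 < (j : ℕ) ∧ j < i <;> simp [he, hσ, hc]
    have h4 : (fun j : Fin n => if j < i
          then ((Sum.elim x (Sum.elim y z) : _ → ℝ) ∘ e) (Sum.inr (Sum.inl j))
          else ((Sum.elim x (Sum.elim y z) : _ → ℝ) ∘ e) (Sum.inl j))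
        = fun j : Fin n => if j < i then y j else x j := by
      funext j
      by_cases hlt : j < i
      · simp [he, hσ, hlt]
      · have hnc : ¬(0 < (j : ℕ) ∧ j < i) := fun hcc => hlt hcc.2
        simp [he, hσ, hlt, hnc]
    rw [h1, h2, h3, h4]
  have key2 : ∀ p : (Fin n → ℝ) × ((Fin n → ℝ) × (Fin n → ℝ)),
      stmt2F2 n f i ((Sum.elim p.1 (Sum.elim p.2.1 p.2.2) : _ → ℝ) ∘ e)
        = stmt2Bf n f i p.1 p.2.2 * stmt2Bg n f i p.1 p.2.1 := by
    rintro ⟨x, y, z⟩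
    simp only [stmt2F2, stmt2Bf, stmt2Bg]
    have h1 : (fun j : Fin n => ((Sum.elim x (Sum.elim y z) : _ → ℝ) ∘ e) (Sum.inl j))
        = fun j : Fin n => if 0 < (j : ℕ) ∧ j < i then z j else x j := by
      funext j
      by_cases hc : 0 < (j : ℕ) ∧ j < i <;> simp [he, hσ, hc]
    have h2 : (fun j : Fin n => if (j : ℕ) = 0
          then ((Sum.elim x (Sum.elim y z) : _ → ℝ) ∘ e) (Sum.inr (Sum.inr j))
          else ((Sum.elim x (Sum.elim y z) : _ → ℝ) ∘ e) (Sum.inl j))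
        = fun j : Fin n => if j < i then z j else x j := by
      funext j
      by_cases h0 : (j : ℕ) = 0
      · have hji : j < i := by rw [Fin.lt_def]; omega
        have hnc : ¬(0 < (j : ℕ) ∧ j < i) := by simp [h0]
        simp [he, hσ, h0, hnc, hji]
      · by_cases hlt : j < i
        · have hc : 0 < (j : ℕ) ∧ j < i := ⟨Nat.pos_of_ne_zero h0, hlt⟩
          simp [he, hσ, h0, hc, hlt]
        · have hnc : ¬(0 < (j : ℕ) ∧ j < i) := fun hcc => hlt hcc.2
          simp [he, hσ, h0, hnc, hlt]
    have h3 : (fun j : Fin n => if 0 < (j : ℕ) ∧ j ≤ i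
          then ((Sum.elim x (Sum.elim y z) : _ → ℝ) ∘ e) (Sum.inr (Sum.inl j))
          else ((Sum.elim x (Sum.elim y z) : _ → ℝ) ∘ e) (Sum.inl j))
        = fun j : Fin n => if 0 < (j : ℕ) ∧ j ≤ i then y j else x j := by
      funext j
      by_cases hc : 0 < (j : ℕ) ∧ j ≤ i
      · simp [he, hσ, hc]
      · have hnc : ¬(0 < (j : ℕ) ∧ j < i) := fun hcc => hc ⟨hcc.1, le_of_lt hcc.2⟩
        simp [he, hσ, hc, hnc]
    have h4 : (fun j : Fin n => if j ≤ i
          then ((Sum.elim x (Sum.elim y z) : _ → ℝ) ∘ e) (Sum.inr (Sum.inl j))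
          else ((Sum.elim x (Sum.elim y z) : _ → ℝ) ∘ e) (Sum.inl j))
        = fun j : Fin n => if j ≤ i then y j else x j := by
      funext j
      by_cases hle : j ≤ i
      · simp [he, hσ, hle]
      · have hnc : ¬(0 < (j : ℕ) ∧ j < i) := fun hcc => hle (le_of_lt hcc.2)
        simp [he, hσ, hle, hnc]
    rw [h1, h2, h3, h4]
  -- transfer of integrals and integrability from `μ` to the product measure
  have htrans : ∀ F : ((Fin n ⊕ (Fin n ⊕ Fin n)) → ℝ) → ℝ, Measurable F →
      Integrable (fun ω => F (T ω)) μ →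
      Integrable F Pb ∧ ∫ ω, F (T ω) ∂μ = ∫ u, F u ∂Pb := by
    intro F hFm hFi
    constructor
    · rw [← hmapT]
      exact (integrable_map_measure hFm.aestronglyMeasurable hTm.aemeasurable).mpr hFi
    · rw [← hmapT, integral_map hTm.aemeasurable hFm.aestronglyMeasurable]
  have hI1 : Integrable (fun ω => stmt2F1 n f i (T ω)) μ := hint1
  have hI2 : Integrable (fun ω => stmt2F2 n f i (T ω)) μ := hint2
  obtain ⟨hF1i, hF1eq⟩ := htrans _ mF1 hI1
  obtain ⟨hF2i, hF2eq⟩ := htrans _ mF2 hI2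
  -- transfer along the permutation
  have mPerm : Measurable (fun u : (Fin n ⊕ (Fin n ⊕ Fin n)) → ℝ => u ∘ e) := hPerm.measurable
  have mSum := hSum.measurable
  have hF1e_i : Integrable (fun u : (Fin n ⊕ (Fin n ⊕ Fin n)) → ℝ =>
      stmt2F1 n f i (u ∘ e)) Pb :=
    (integrable_map_measure mF1.aestronglyMeasurable mPerm.aemeasurable).mp
      (by rw [hPerm.map_eq]; exact hF1i)
  have hF2e_i : Integrable (fun u : (Fin n ⊕ (Fin n ⊕ Fin n)) → ℝ =>
      stmt2F2 n f i (u ∘ e)) Pb :=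
    (integrable_map_measure mF2.aestronglyMeasurable mPerm.aemeasurable).mp
      (by rw [hPerm.map_eq]; exact hF2i)
  have hF1e_eq : ∫ u, stmt2F1 n f i u ∂Pb = ∫ u, stmt2F1 n f i (u ∘ e) ∂Pb := by
    conv_lhs => rw [← hPerm.map_eq]
    exact integral_map mPerm.aemeasurable mF1.aestronglyMeasurable
  have hF2e_eq : ∫ u, stmt2F2 n f i u ∂Pb = ∫ u, stmt2F2 n f i (u ∘ e) ∂Pb := by
    conv_lhs => rw [← hPerm.map_eq]
    exact integral_map mPerm.aemeasurable mF2.aestronglyMeasurable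
  -- transfer along the regrouping into a triple product
  have hF1s_i : Integrable (fun p : (Fin n → ℝ) × ((Fin n → ℝ) × (Fin n → ℝ)) =>
      stmt2F1 n f i ((Sum.elim p.1 (Sum.elim p.2.1 p.2.2) : _ → ℝ) ∘ e))
      (Pn.prod (Pn.prod Pn)) :=
    (integrable_map_measure (mF1.comp mPerm).aestronglyMeasurable mSum.aemeasurable).mp
      (by rw [hSum.map_eq]; exact hF1e_i)
  have hF2s_i : Integrable (fun p : (Fin n → ℝ) × ((Fin n → ℝ) × (Fin n → ℝ)) =>
      stmt2F2 n f i ((Sum.elim p.1 (Sum.elim p.2.1 p.2.2) : _ → ℝ) ∘ e))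
      (Pn.prod (Pn.prod Pn)) :=
    (integrable_map_measure (mF2.comp mPerm).aestronglyMeasurable mSum.aemeasurable).mp
      (by rw [hSum.map_eq]; exact hF2e_i)
  have hF1s_eq : ∫ u, stmt2F1 n f i (u ∘ e) ∂Pb
      = ∫ p, stmt2F1 n f i ((Sum.elim p.1 (Sum.elim p.2.1 p.2.2) : _ → ℝ) ∘ e)
          ∂(Pn.prod (Pn.prod Pn)) := by
    conv_lhs => rw [← hSum.map_eq]
    exact integral_map mSum.aemeasurable (mF1.comp mPerm).aestronglyMeasurable
  have hF2s_eq : ∫ u, stmt2F2 n f i (u ∘ e) ∂Pb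
      = ∫ p, stmt2F2 n f i ((Sum.elim p.1 (Sum.elim p.2.1 p.2.2) : _ → ℝ) ∘ e)
          ∂(Pn.prod (Pn.prod Pn)) := by
    conv_lhs => rw [← hSum.map_eq]
    exact integral_map mSum.aemeasurable (mF2.comp mPerm).aestronglyMeasurable
  have hH1i : Integrable (fun p : (Fin n → ℝ) × ((Fin n → ℝ) × (Fin n → ℝ)) =>
      stmt2Bf n f i p.1 p.2.2 * stmt2Bf n f i p.1 p.2.1) (Pn.prod (Pn.prod Pn)) :=
    hF1s_i.congr (Filter.Eventually.of_forall key1)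
  have hH2i : Integrable (fun p : (Fin n → ℝ) × ((Fin n → ℝ) × (Fin n → ℝ)) =>
      stmt2Bf n f i p.1 p.2.2 * stmt2Bg n f i p.1 p.2.1) (Pn.prod (Pn.prod Pn)) :=
    hF2s_i.congr (Filter.Eventually.of_forall key2)
  -- Fubini for the triple products
  have hinner1 : ∀ x, ∫ q, stmt2Bf n f i x q.2 * stmt2Bf n f i x q.1 ∂(Pn.prod Pn)
      = G x * G x := fun x => by
    calc ∫ q, stmt2Bf n f i x q.2 * stmt2Bf n f i x q.1 ∂(Pn.prod Pn)
        = ∫ q, stmt2Bf n f i x q.1 * stmt2Bf n f i x q.2 ∂(Pn.prod Pn) :=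
          integral_congr_ae (Filter.Eventually.of_forall fun q => mul_comm _ _)
      _ = G x * G x := integral_prod_mul _ _
  have hinner2 : ∀ x, ∫ q, stmt2Bf n f i x q.2 * stmt2Bg n f i x q.1 ∂(Pn.prod Pn)
      = H x * G x := fun x => by
    calc ∫ q, stmt2Bf n f i x q.2 * stmt2Bg n f i x q.1 ∂(Pn.prod Pn)
        = ∫ q, stmt2Bg n f i x q.1 * stmt2Bf n f i x q.2 ∂(Pn.prod Pn) :=
          integral_congr_ae (Filter.Eventually.of_forall fun q => mul_comm _ _)
      _ = H x * G x := integral_prod_mul _ _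
  have hstep1 : ∫ u, stmt2F1 n f i u ∂Pb = ∫ x, G x * G x ∂Pn := by
    rw [hF1e_eq, hF1s_eq, integral_congr_ae (Filter.Eventually.of_forall key1),
      integral_prod _ hH1i]
    exact integral_congr_ae (Filter.Eventually.of_forall fun x => hinner1 x)
  have hstep2 : ∫ u, stmt2F2 n f i u ∂Pb = ∫ x, H x * G x ∂Pn := by
    rw [hF2e_eq, hF2s_eq, integral_congr_ae (Filter.Eventually.of_forall key2),
      integral_prod _ hH2i]
    exact integral_congr_ae (Filter.Eventually.of_forall fun x => hinner2 x)
  have hGGi : Integrable (fun x => G x * G x) Pn :=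
    hH1i.integral_prod_left.congr (Filter.Eventually.of_forall fun x => hinner1 x)
  have hHGi : Integrable (fun x => H x * G x) Pn :=
    hH2i.integral_prod_left.congr (Filter.Eventually.of_forall fun x => hinner2 x)
  -- the resampling map for coordinate i
  have mΦ : Measurable (fun p : (Fin n → ℝ) × ℝ => Function.update p.1 i p.2) :=
    measurable_update'
  have hGG_Φi : Integrable (fun p : (Fin n → ℝ) × ℝ =>
      G (Function.update p.1 i p.2) * G (Function.update p.1 i p.2)) (Pn.prod ν) :=
    (integrable_map_measure (hGsm.mul hGsm).aestronglyMeasurable mΦ.aemeasurable).mp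
      (by rw [hUpd.map_eq]; exact hGGi)
  have hstepA : ∫ x, G x * G x ∂Pn
      = ∫ x, ∫ t, G (Function.update x i t) * G (Function.update x i t) ∂ν ∂Pn := by
    have h1 : ∫ x, G x * G x ∂Pn = ∫ p : (Fin n → ℝ) × ℝ,
        G (Function.update p.1 i p.2) * G (Function.update p.1 i p.2) ∂(Pn.prod ν) := by
      conv_lhs => rw [← hUpd.map_eq]
      exact integral_map mΦ.aemeasurable ((hGsm.mul hGsm).aestronglyMeasurable)
    rw [h1]
    exact integral_prod _ hGG_Φi
  have hqI : Integrable
      (fun x => ∫ t, G (Function.update x i t) * G (Function.update x i t) ∂ν) Pn :=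
    hGG_Φi.integral_prod_left
  -- H does not depend on coordinate i
  have hH_upd : ∀ (x : Fin n → ℝ) (t : ℝ), H (Function.update x i t) = H x := by
    intro x t
    have hne : ∀ j : Fin n, ¬(0 < (j : ℕ) ∧ j ≤ i) → Function.update x i t j = x j := by
      intro j hj
      refine Function.update_of_ne (fun hji => hj ?_) _ _
      subst hji
      exact ⟨hi, le_refl j⟩
    simp only [hH]
    refine integral_congr_ae (Filter.Eventually.of_forall fun w => ?_)
    simp only [stmt2Bg]
    congr 1
    · refine congrArg f (funext fun j => ?_)
      by_cases hc : 0 < (j : ℕ) ∧ j ≤ i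
      · simp [hc]
      · simp [hc, hne j hc]
    · refine congrArg f (funext fun j => ?_)
      by_cases hc : j ≤ i
      · simp [hc]
      · have hnc : ¬(0 < (j : ℕ) ∧ j ≤ i) := fun hcc => hc hcc.2
        simp [hc, hne j hnc]
  have hHG_Φi : Integrable (fun p : (Fin n → ℝ) × ℝ =>
      H (Function.update p.1 i p.2) * G (Function.update p.1 i p.2)) (Pn.prod ν) :=
    (integrable_map_measure (hHsm.mul hGsm).aestronglyMeasurable mΦ.aemeasurable).mp
      (by rw [hUpd.map_eq]; exact hHGi)
  have hHG_Φi' : Integrable (fun p : (Fin n → ℝ) × ℝ =>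
      H p.1 * G (Function.update p.1 i p.2)) (Pn.prod ν) :=
    hHG_Φi.congr (Filter.Eventually.of_forall fun p => by simp only [hH_upd])
  have hstepB : ∫ x, H x * G x ∂Pn
      = ∫ x, H x * ∫ t, G (Function.update x i t) ∂ν ∂Pn := by
    have h1 : ∫ x, H x * G x ∂Pn = ∫ p : (Fin n → ℝ) × ℝ,
        H (Function.update p.1 i p.2) * G (Function.update p.1 i p.2) ∂(Pn.prod ν) := by
      conv_lhs => rw [← hUpd.map_eq]
      exact integral_map mΦ.aemeasurable ((hHsm.mul hGsm).aestronglyMeasurable)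
    rw [h1]
    calc ∫ p : (Fin n → ℝ) × ℝ,
            H (Function.update p.1 i p.2) * G (Function.update p.1 i p.2) ∂(Pn.prod ν)
        = ∫ p : (Fin n → ℝ) × ℝ, H p.1 * G (Function.update p.1 i p.2) ∂(Pn.prod ν) :=
          integral_congr_ae (Filter.Eventually.of_forall fun p => by simp only [hH_upd])
      _ = ∫ x, ∫ t, H x * G (Function.update x i t) ∂ν ∂Pn := integral_prod _ hHG_Φi'
      _ = ∫ x, H x * ∫ t, G (Function.update x i t) ∂ν ∂Pn := by
          refine integral_congr_ae (Filter.Eventually.of_forall fun x => ?_)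
          show ∫ t, H x * G (Function.update x i t) ∂ν
              = H x * ∫ t, G (Function.update x i t) ∂ν
          exact integral_const_mul _ _
  have hmargI : Integrable (fun x => H x * ∫ t, G (Function.update x i t) ∂ν) Pn :=
    hHG_Φi'.integral_prod_left.congr
      (Filter.Eventually.of_forall fun x => by
        show ∫ t, H x * G (Function.update x i t) ∂ν
            = H x * ∫ t, G (Function.update x i t) ∂ν
        exact integral_const_mul _ _)
  -- the pointwise relation between the two kernels under resampling
  have hBgBf : ∀ (x w : Fin n → ℝ) (t : ℝ),
      stmt2Bg n f i x (Function.update w i t) = stmt2Bf n f i (Function.update x i t) w := by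
    intro x w t
    simp only [stmt2Bf, stmt2Bg]
    congr 1
    · refine congrArg f (funext fun j => ?_)
      rcases eq_or_ne j i with rfl | hne
      · have hc1 : 0 < (j : ℕ) ∧ j ≤ j := ⟨hi, le_refl j⟩
        simp [hc1, lt_irrefl]
      · by_cases hc : 0 < (j : ℕ) ∧ j < i
        · have hc' : 0 < (j : ℕ) ∧ j ≤ i := ⟨hc.1, le_of_lt hc.2⟩
          simp [hc, hc', Function.update_of_ne hne]
        · have hc' : ¬(0 < (j : ℕ) ∧ j ≤ i) := by
            rintro ⟨ha, hb⟩
            exact hc ⟨ha, lt_of_le_of_ne hb hne⟩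
          simp [hc, hc', Function.update_of_ne hne]
    · refine congrArg f (funext fun j => ?_)
      rcases eq_or_ne j i with rfl | hne
      · simp [lt_irrefl]
      · by_cases hlt : j < i
        · simp [hlt, le_of_lt hlt, Function.update_of_ne hne]
        · have hnle : ¬ j ≤ i := fun hle => hlt (lt_of_le_of_ne hle hne)
          simp [hlt, hnle, Function.update_of_ne hne]
  have mGupd : ∀ x : Fin n → ℝ, Measurable (fun t => G (Function.update x i t)) :=
    fun x => hGsm.measurable.comp (measurable_update x)
  have mBgx : ∀ x : Fin n → ℝ, Measurable (fun w => stmt2Bg n f i x w) :=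
    fun x => mBgp.comp measurable_prodMk_left
  have hsect : ∀ᵐ x ∂Pn,
      Integrable (fun t => G (Function.update x i t) * G (Function.update x i t)) ν :=
    hGG_Φi.prod_right_ae
  have hpoint : ∀ᵐ x ∂Pn, H x * (∫ t, G (Function.update x i t) ∂ν)
      ≤ ∫ t, G (Function.update x i t) * G (Function.update x i t) ∂ν := by
    filter_upwards [hsect] with x hx
    by_cases hBx : Integrable (fun w => stmt2Bg n f i x w) Pn
    · have hBxΦ : Integrable
          (fun p : (Fin n → ℝ) × ℝ => stmt2Bg n f i x (Function.update p.1 i p.2))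
          (Pn.prod ν) :=
        (integrable_map_measure (mBgx x).aestronglyMeasurable mΦ.aemeasurable).mp
          (by rw [hUpd.map_eq]; exact hBx)
      have hHx : H x = ∫ t, G (Function.update x i t) ∂ν := by
        calc H x = ∫ w, stmt2Bg n f i x w ∂Pn := by simp only [hH]
          _ = ∫ p : (Fin n → ℝ) × ℝ,
                stmt2Bg n f i x (Function.update p.1 i p.2) ∂(Pn.prod ν) := by
              conv_lhs => rw [← hUpd.map_eq]
              exact integral_map mΦ.aemeasurable (mBgx x).aestronglyMeasurable
          _ = ∫ w, ∫ t, stmt2Bg n f i x (Function.update w i t) ∂ν ∂Pn :=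
              integral_prod _ hBxΦ
          _ = ∫ t, ∫ w, stmt2Bg n f i x (Function.update w i t) ∂Pn ∂ν :=
              integral_integral_swap hBxΦ
          _ = ∫ t, G (Function.update x i t) ∂ν := by
              refine integral_congr_ae (Filter.Eventually.of_forall fun t => ?_)
              show ∫ w, stmt2Bg n f i x (Function.update w i t) ∂Pn
                  = G (Function.update x i t)
              rw [show (fun w => stmt2Bg n f i x (Function.update w i t))
                  = fun w => stmt2Bf n f i (Function.update x i t) w from
                funext fun w => hBgBf x w t]
      rw [hHx]
      exact stmt2_aux_cs ν _ (mGupd x).aestronglyMeasurable hx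
    · have hHx0 : H x = 0 := by
        simp only [hH]
        exact integral_undef hBx
      rw [hHx0, zero_mul]
      exact integral_nonneg fun t => mul_self_nonneg _
  -- conclusion
  rw [ge_iff_le]
  calc ∫ ω,
        (f (fun j => X j ω) - f (fun j => if (j : ℕ) = 0 then X'' j ω else X j ω)) *
        (f (fun j => if 0 < (j : ℕ) ∧ j ≤ i then X' j ω else X j ω) -
         f (fun j => if j ≤ i then X' j ω else X j ω)) ∂μ
      = ∫ u, stmt2F2 n f i u ∂Pb := hF2eq
    _ = ∫ x, H x * G x ∂Pn := hstep2
    _ = ∫ x, H x * ∫ t, G (Function.update x i t) ∂ν ∂Pn := hstepB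
    _ ≤ ∫ x, ∫ t, G (Function.update x i t) * G (Function.update x i t) ∂ν ∂Pn :=
        integral_mono_ae hmargI hqI hpoint
    _ = ∫ x, G x * G x ∂Pn := hstepA.symm
    _ = ∫ u, stmt2F1 n f i u ∂Pb := hstep1.symm
    _ = ∫ ω,
        (f (fun j => X j ω) - f (fun j => if (j : ℕ) = 0 then X'' j ω else X j ω)) *
        (f (fun j => if 0 < (j : ℕ) ∧ j < i then X' j ω else X j ω) -
         f (fun j => if j < i then X' j ω else X j ω)) ∂μ := hF1eq.symm
end

section
/- Let v, w ∈ R^N be unit vectors with ‖v‖_∞ ≤ M/√N, ‖w‖_∞ ≤ M/√N, and suppose for all i, j that N |v_i v_j - w_i w_j| ≤ δ. For each i choose s_i ∈ {±1} with s_i v_i w_i ≥ 0, so that √N |s_i v_i - w_i| ≤ √δ. Then for all i, j with s_i ≠ s_j: (1 - s_i s_j) N |v_i v_j| ≤ 2δ + 4M√δ. -/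
open Real Finset

/-- Bound on cross-products at indices with mismatched signs:
`(1 - sᵢ sⱼ) N |vᵢ vⱼ| ≤ 2δ + 4M√δ` whenever `sᵢ ≠ sⱼ`. -/
theorem stmt10 (N : ℕ) (v w : Fin N → ℝ)
    (hv : ∑ i, v i ^ 2 = 1) (hw : ∑ i, w i ^ 2 = 1)
    (M : ℝ) (hM : 1 ≤ M)
    (hvM : ∀ i, |v i| ≤ M / Real.sqrt N) (hwM : ∀ i, |w i| ≤ M / Real.sqrt N)
    (δ : ℝ) (hδ : 0 < δ)
    (hclose : ∀ i j : Fin N, (N : ℝ) * |v i * v j - w i * w j| ≤ δ)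
    (s : Fin N → ℝ) (hs : ∀ i, s i = 1 ∨ s i = -1)
    (hsign : ∀ i, 0 ≤ s i * v i * w i)
    (hcomp : ∀ i, Real.sqrt N * |s i * v i - w i| ≤ Real.sqrt δ) :
    ∀ i j : Fin N, s i ≠ s j →
      (1 - s i * s j) * N * |v i * v j| ≤ 2 * δ + 4 * M * Real.sqrt δ := by
  intro i j hij
  have hsi2 : s i * s i = 1 := by rcases hs i with h | h <;> rw [h] <;> ring
  have hsj2 : s j * s j = 1 := by rcases hs j with h | h <;> rw [h] <;> ring
  have hss : s i * s j = -1 := by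
    rcases hs i with h | h <;> rcases hs j with h' | h' <;>
      simp [h, h'] at hij ⊢ <;> norm_num
  have hNpos : (0:ℝ) ≤ N := Nat.cast_nonneg N
  have hsq : Real.sqrt N * Real.sqrt N = (N:ℝ) := Real.mul_self_sqrt hNpos
  have hδ' : (0:ℝ) ≤ Real.sqrt δ := Real.sqrt_nonneg δ
  rcases Nat.eq_zero_or_pos N with h0 | hN
  · subst h0; exact i.elim0
  have hNs : 0 < Real.sqrt N := Real.sqrt_pos.2 (by exact_mod_cast hN)
  have hvj : Real.sqrt N * |v j| ≤ M := by
    have := (le_div_iff₀ hNs).1 (hvM j); linarith [this, mul_comm (|v j|) (Real.sqrt N)]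
  have hwi : Real.sqrt N * |w i| ≤ M := by
    have := (le_div_iff₀ hNs).1 (hwM i); linarith [this, mul_comm (|w i|) (Real.sqrt N)]
  have hA : (N:ℝ) * (|s i * v i - w i| * |v j|) ≤ Real.sqrt δ * M := by
    calc (N:ℝ) * (|s i * v i - w i| * |v j|)
        = (Real.sqrt N * |s i * v i - w i|) * (Real.sqrt N * |v j|) := by
          linear_combination (-(|s i * v i - w i| * |v j|)) * hsq
      _ ≤ Real.sqrt δ * M :=
          mul_le_mul (hcomp i) hvj (by positivity) hδ'
  have hB : (N:ℝ) * (|w i| * |s j * v j - w j|) ≤ M * Real.sqrt δ := by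
    calc (N:ℝ) * (|w i| * |s j * v j - w j|)
        = (Real.sqrt N * |w i|) * (Real.sqrt N * |s j * v j - w j|) := by
          linear_combination (-(|w i| * |s j * v j - w j|)) * hsq
      _ ≤ M * Real.sqrt δ :=
          mul_le_mul hwi (hcomp j) (by positivity) (le_trans zero_le_one hM)
  have habsi : |v i - s i * w i| = |s i * v i - w i| := by
    have h1 : |s i| = 1 := by rcases hs i with h | h <;> simp [h]
    calc |v i - s i * w i| = |s i| * |v i - s i * w i| := by rw [h1, one_mul]
      _ = |s i * (v i - s i * w i)| := (abs_mul _ _).symm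
      _ = |s i * v i - w i| := by
          rw [show s i * (v i - s i * w i) = s i * v i - (s i * s i) * w i by ring,
            hsi2, one_mul]
  have habsj : |v j - s j * w j| = |s j * v j - w j| := by
    have h1 : |s j| = 1 := by rcases hs j with h | h <;> simp [h]
    calc |v j - s j * w j| = |s j| * |v j - s j * w j| := by rw [h1, one_mul]
      _ = |s j * (v j - s j * w j)| := (abs_mul _ _).symm
      _ = |s j * v j - w j| := by
          rw [show s j * (v j - s j * w j) = s j * v j - (s j * s j) * w j by ring,
            hsj2, one_mul]
  have hkey : v i * v j + w i * w j
      = (v i - s i * w i) * v j + (s i * w i) * (v j - s j * w j) := by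
    linear_combination (w i * w j) * hss
  have h1 : |v i * v j + w i * w j| ≤ |s i * v i - w i| * |v j| + |w i| * |s j * v j - w j| := by
    rw [hkey]
    have hsi1 : |s i| = 1 := by rcases hs i with h | h <;> simp [h]
    calc |(v i - s i * w i) * v j + (s i * w i) * (v j - s j * w j)|
        ≤ |(v i - s i * w i) * v j| + |(s i * w i) * (v j - s j * w j)| := abs_add_le _ _
      _ = |s i * v i - w i| * |v j| + |w i| * |s j * v j - w j| := by
          rw [abs_mul, abs_mul, abs_mul, hsi1, one_mul, habsi, habsj]
  have h2 : (N:ℝ) * |2 * (v i * v j)| ≤ δ + 2 * M * Real.sqrt δ := by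
    have e : 2 * (v i * v j) = (v i * v j - w i * w j) + (v i * v j + w i * w j) := by ring
    calc (N:ℝ) * |2 * (v i * v j)|
        ≤ (N:ℝ) * (|v i * v j - w i * w j| + |v i * v j + w i * w j|) := by
          rw [e]; exact mul_le_mul_of_nonneg_left (abs_add_le _ _) hNpos
      _ = (N:ℝ) * |v i * v j - w i * w j| + (N:ℝ) * |v i * v j + w i * w j| := by ring
      _ ≤ δ + ((N:ℝ) * (|s i * v i - w i| * |v j| + |w i| * |s j * v j - w j|)) := by
          exact add_le_add (hclose i j) (mul_le_mul_of_nonneg_left h1 hNpos)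
      _ ≤ δ + 2 * M * Real.sqrt δ := by
          linarith [hA, hB]
  rw [hss]
  have h3 : |2 * (v i * v j)| = 2 * |v i * v j| := by rw [abs_mul, abs_two]
  rw [h3] at h2
  nlinarith [hδ.le, le_trans zero_le_one hM, hδ', h2]
end

section
/- Let v, w ∈ R^N be unit vectors, and suppose there exist ε ∈ (0, 1/4) and componentwise signs s_i ∈ {±1} such that √N |s_i v_i - w_i| ≤ ε for all i, and moreover (1 - s_i s_j) N |v_i v_j| ≤ ε for all i, j. Let J = {i : √N |v_i| > 2√ε}. If J ≠ ∅, then s_i = s_j for all i, j ∈ J, and choosing s = s_i for any i ∈ J, we have for all i ∈ {1,...,N}: √N |s v_i - w_i| ≤ 5√ε, provided additionally ‖v‖_∞ ≤ 1 and ‖w‖_∞ ≤ 1. -/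
open Real Finset

/-- Gluing componentwise signs into a single global sign: on the set `J` of large
coordinates all signs agree, and the common sign `s` satisfies
`√N |s vᵢ - wᵢ| ≤ 5√ε` for every coordinate `i`. -/
theorem stmt11 (N : ℕ) (v w : Fin N → ℝ)
    (hv : ∑ i, v i ^ 2 = 1) (hw : ∑ i, w i ^ 2 = 1)
    (ε : ℝ) (hε : 0 < ε) (hε' : ε < 1 / 4)
    (s : Fin N → ℝ) (hs : ∀ i, s i = 1 ∨ s i = -1)
    (hcomp : ∀ i, Real.sqrt N * |s i * v i - w i| ≤ ε)
    (hcross : ∀ i j : Fin N, (1 - s i * s j) * N * |v i * v j| ≤ ε)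
    (hvinf : ∀ i, |v i| ≤ 1) (hwinf : ∀ i, |w i| ≤ 1)
    (J : Finset (Fin N)) (hJ : J = Finset.univ.filter (fun i => Real.sqrt N * |v i| > 2 * Real.sqrt ε))
    (hJne : J.Nonempty) :
    (∀ i ∈ J, ∀ j ∈ J, s i = s j) ∧
    ∀ i₀ ∈ J, ∀ i : Fin N, Real.sqrt N * |s i₀ * v i - w i| ≤ 5 * Real.sqrt ε := by
  have hsqε : ε ≤ Real.sqrt ε := by
    nlinarith [Real.sq_sqrt hε.le, Real.sqrt_nonneg ε]
  have hsε : 0 < Real.sqrt ε := Real.sqrt_pos.mpr hε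
  have hsN : (0:ℝ) ≤ Real.sqrt N := Real.sqrt_nonneg N
  have hNN : Real.sqrt N * Real.sqrt N = (N:ℝ) := Real.mul_self_sqrt (Nat.cast_nonneg N)
  have hsε2 : Real.sqrt ε * Real.sqrt ε = ε := Real.mul_self_sqrt hε.le
  have hsign : ∀ i ∈ J, ∀ j ∈ J, s i = s j := by
    intro i hi j hj
    rw [hJ, Finset.mem_filter] at hi hj
    by_contra hne
    have hij : s i * s j = -1 := by
      rcases hs i with h1 | h1 <;> rcases hs j with h2 | h2 <;>
        simp [h1, h2] at hne ⊢
    have h := hcross i j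
    rw [hij] at h
    have hkey : (2 * Real.sqrt ε) * (2 * Real.sqrt ε) <
        (Real.sqrt N * |v i|) * (Real.sqrt N * |v j|) :=
      mul_lt_mul'' hi.2 hj.2 (by positivity) (by positivity)
    have heq : (Real.sqrt N * |v i|) * (Real.sqrt N * |v j|) = (N:ℝ) * |v i * v j| := by
      rw [abs_mul, mul_mul_mul_comm, hNN]
    nlinarith
  refine ⟨hsign, ?_⟩
  intro i₀ hi₀ i
  have habs0 : |s i₀| = 1 := by rcases hs i₀ with h | h <;> simp [h]
  by_cases hiJ : i ∈ J
  · have : s i₀ = s i := hsign i₀ hi₀ i hiJ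
    rw [this]
    calc Real.sqrt N * |s i * v i - w i| ≤ ε := hcomp i
      _ ≤ 5 * Real.sqrt ε := by linarith
  · have hsmall : Real.sqrt N * |v i| ≤ 2 * Real.sqrt ε := by
      rw [hJ] at hiJ
      simp only [Finset.mem_filter, Finset.mem_univ, true_and, not_lt] at hiJ
      exact hiJ
    have habsi : |s i| = 1 := by rcases hs i with h | h <;> simp [h]
    have h1 : |w i| ≤ |v i| + |s i * v i - w i| := by
      calc |w i| = |s i * v i - (s i * v i - w i)| := by congr 1; ring
        _ ≤ |s i * v i| + |s i * v i - w i| := abs_sub _ _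
        _ = |v i| + |s i * v i - w i| := by rw [abs_mul, habsi, one_mul]
    have h2 : |s i₀ * v i - w i| ≤ |v i| + |w i| := by
      calc |s i₀ * v i - w i| ≤ |s i₀ * v i| + |w i| := abs_sub _ _
        _ = |v i| + |w i| := by rw [abs_mul, habs0, one_mul]
    have h3 := hcomp i
    have h4 : Real.sqrt N * |w i| ≤ Real.sqrt N * |v i| + Real.sqrt N * |s i * v i - w i| := by
      nlinarith [abs_nonneg (w i)]
    have h5 : Real.sqrt N * |s i₀ * v i - w i| ≤ Real.sqrt N * |v i| + Real.sqrt N * |w i| := by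
      nlinarith [abs_nonneg (s i₀ * v i - w i)]
    linarith
end
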